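/- arXiv:0908.1016 — 3 statements merged into one kernel-verified Lean document; each statement's English description precedes it below -/
import Mathlib

section
/- Let d ≥ 2, let G be a rank-4 covariant tensor on ℝ^d with components G_{abcd} satisfying G_{abcd} = G_{cdab} = −G_{bacd}, and let t be a d×d real matrix with entries t^m_a. Define G'_{abcd} = t^m_a t^n_b t^p_c t^q_d G_{mnpq} (sum over repeated indices). Then det(Petrov(G')) = (det t)^(2d−2) · det(Petrov(G)). -/
/-!
Writing `Λ²t` for the second compound matrix of `t` (its `2 × 2` minors, indexed by pairs
`a < b`), antisymmetry of `G` in each index pair folds every double sum over `(m, n)` into a sum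
over pairs `m < n`, which gives `Petrov G' = (Λ²t)ᵀ * Petrov G * Λ²t`. It remains to see
`det Λ²t = (det t) ^ (d - 1)`. Both sides are monoid homomorphisms in `t` (Cauchy–Binet for
`2 × 2` minors) and they agree on diagonal matrices. Any monoid homomorphism from matrices to a
commutative monoid is trivial on transvections, since conjugating a transvection by a diagonal
matrix can double it; as diagonal matrices and transvections generate all matrices, the two
homomorphisms coincide.
-/

/-- The Petrov matrix of a rank-4 covariant tensor `G` on `ℝ^d` with the symmetries
`G_{abcd} = G_{cdab} = -G_{bacd}`: a square matrix indexed by the ordered index pairs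
`[ab]` with `a < b`, whose `([ab],[cd])` entry is `G_{abcd}`. -/
def petrovMatrix {d : ℕ} (G : Fin d → Fin d → Fin d → Fin d → ℝ) :
    Matrix {p : Fin d × Fin d // p.1 < p.2} {p : Fin d × Fin d // p.1 < p.2} ℝ :=
  Matrix.of fun i j => G i.1.1 i.1.2 j.1.1 j.1.2

open Finset Matrix

abbrev IncreasingPair (n : Type*) [LT n] := {p : n × n // p.1 < p.2}

section Pairs

variable {n : Type*} [Fintype n] [LinearOrder n] {M : Type*} [CommMonoid M]

@[to_additive]
theorem prod_increasingPair (f : n → n → M) :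
    ∏ P : IncreasingPair n, f P.1.1 P.1.2 = ∏ a, ∏ b, if a < b then f a b else 1 := by
  rw [← Fintype.prod_prod_type' (fun a b => if a < b then f a b else 1), ← prod_filter]
  exact (prod_subtype (univ.filter fun p : n × n => p.1 < p.2) (by simp) fun p => f p.1 p.2).symm

@[to_additive]
theorem prod_prod_eq_prod_increasingPair (f : n → n → M) (hf : ∀ a, f a a = 1) :
    ∏ a, ∏ b, f a b = ∏ P : IncreasingPair n, f P.1.1 P.1.2 * f P.1.2 P.1.1 := by
  rw [prod_mul_distrib, prod_increasingPair, prod_increasingPair (fun a b => f b a),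
    prod_comm (f := fun a b => if a < b then f b a else 1), ← prod_mul_distrib]
  refine prod_congr rfl fun a _ => ?_
  rw [← prod_mul_distrib]
  refine prod_congr rfl fun b _ => ?_
  rcases lt_trichotomy a b with h | rfl | h
  · simp [h, h.not_gt]
  · simp [hf]
  · simp [h, h.not_gt]

theorem prod_increasingPair_mul_eq_pow (δ : n → M) :
    ∏ P : IncreasingPair n, δ P.1.1 * δ P.1.2 = (∏ a, δ a) ^ (Fintype.card n - 1) := by
  have h := prod_prod_eq_prod_increasingPair (fun a b => if a = b then 1 else δ a) (by simp)
  simp only [prod_ite, prod_const_one, one_mul, prod_const, filter_ne,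
    card_erase_of_mem (mem_univ _), card_univ] at h
  rw [← prod_pow, h]
  exact prod_congr rfl fun P _ => by simp [P.2.ne, P.2.ne']

theorem sum_sum_mul_mul_of_alternating {R : Type*} [CommRing R] (x y : n → R) (F : n → n → R)
    (hF : ∀ a b, F b a = -F a b) (hF₀ : ∀ a, F a a = 0) :
    ∑ a, ∑ b, x a * y b * F a b
      = ∑ P : IncreasingPair n, (x P.1.1 * y P.1.2 - x P.1.2 * y P.1.1) * F P.1.1 P.1.2 := by
  rw [sum_sum_eq_sum_increasingPair _ fun a => by rw [hF₀, mul_zero]]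
  exact sum_congr rfl fun P _ => by rw [hF]; ring

end Pairs

namespace Matrix

variable {l m n R : Type*} [LinearOrder l] [LinearOrder m] [LinearOrder n] [CommRing R]

def secondCompound (A : Matrix m n R) : Matrix (IncreasingPair m) (IncreasingPair n) R :=
  of fun P Q => A P.1.1 Q.1.1 * A P.1.2 Q.1.2 - A P.1.2 Q.1.1 * A P.1.1 Q.1.2

theorem secondCompound_mul [Fintype m] (A : Matrix l m R) (B : Matrix m n R) :
    (A * B).secondCompound = A.secondCompound * B.secondCompound := by
  ext P Q
  simp only [secondCompound, mul_apply, of_apply]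
  calc _ = ∑ a, ∑ b,
        A P.1.1 a * A P.1.2 b * (B a Q.1.1 * B b Q.1.2 - B b Q.1.1 * B a Q.1.2) := by
        rw [mul_comm (∑ j, A P.1.2 j * B j Q.1.1), sum_mul_sum, sum_mul_sum, ← sum_sub_distrib]
        refine sum_congr rfl fun a _ => ?_
        rw [← sum_sub_distrib]
        exact sum_congr rfl fun b _ => by ring
    _ = _ := by
        rw [sum_sum_mul_mul_of_alternating _ _ _ (fun _ _ => by ring) (fun _ => by ring)]
        exact sum_congr rfl fun S _ => by ring

theorem secondCompound_diagonal [DecidableEq m] (δ : m → R) :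
    (diagonal δ).secondCompound = diagonal fun P : IncreasingPair m => δ P.1.1 * δ P.1.2 := by
  ext P Q
  by_cases h : P = Q
  · subst h
    simp [secondCompound, P.2.ne]
  · have hP := P.2
    have hQ := Q.2
    have hne : ¬ (P.1.1 = Q.1.1 ∧ P.1.2 = Q.1.2) := fun h' =>
      h (Subtype.ext (Prod.ext h'.1 h'.2))
    simp only [secondCompound, of_apply, diagonal_apply, h]
    grind

theorem secondCompound_one [DecidableEq m] : (1 : Matrix m m R).secondCompound = 1 := by
  rw [← diagonal_one, secondCompound_diagonal]
  simp

def secondCompoundHom [Fintype m] [DecidableEq m] :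
    Matrix m m R →* Matrix (IncreasingPair m) (IncreasingPair m) R where
  toFun := secondCompound
  map_one' := secondCompound_one
  map_mul' := secondCompound_mul

section Transvection

variable {ι : Type*} [Fintype ι] [DecidableEq ι]

theorem diagonal_mul_transvection_mul_diagonal (δ δ' : ι → R) (i j : ι) (c : R)
    (h : ∀ k, δ k * δ' k = 1) :
    diagonal δ * transvection i j c * diagonal δ' = transvection i j (δ i * c * δ' j) := by
  ext a b
  simp only [diagonal_mul, mul_diagonal, transvection, add_apply, one_apply, single_apply]
  split_ifs <;> grind

variable {K M : Type*} [Field K] [NeZero (2 : K)] [CommMonoid M]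

theorem map_transvection_eq_one (f : Matrix ι ι K →* M) {i j : ι} (hij : i ≠ j) (c : K) :
    f (transvection i j c) = 1 := by
  obtain ⟨D, D', hDD', hconj⟩ : ∃ D D' : Matrix ι ι K,
      D * D' = 1 ∧ D * transvection i j c * D' = transvection i j (c + c) := by
    refine ⟨diagonal fun k => if k = i then 2 else 1,
      diagonal fun k => if k = i then 2⁻¹ else 1, ?_, ?_⟩
    · rw [diagonal_mul_diagonal, ← diagonal_one]
      congr 1
      ext k
      split_ifs <;> simp [two_ne_zero]
    · rw [diagonal_mul_transvection_mul_diagonal _ _ _ _ _ fun k => by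
        split_ifs <;> simp [two_ne_zero]]
      rw [if_pos rfl, if_neg hij.symm, mul_one, two_mul]
  have hinv : f (transvection i j c) * f (transvection i j (-c)) = 1 := by
    rw [← map_mul, transvection_mul_transvection_same i j hij, add_neg_cancel, transvection_zero,
      map_one]
  have hidem : f (transvection i j c) * f (transvection i j c) = f (transvection i j c) := by
    rw [← map_mul, transvection_mul_transvection_same i j hij, ← hconj, map_mul, map_mul,
      mul_right_comm, ← map_mul f D, hDD', map_one, one_mul]
  calc f (transvection i j c)
      = f (transvection i j c) * (f (transvection i j c) * f (transvection i j (-c))) := by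
        rw [hinv, mul_one]
    _ = 1 := by rw [← mul_assoc, hidem, hinv]

theorem monoidHom_ext_diagonal {f g : Matrix ι ι K →* M}
    (h : ∀ δ, f (diagonal δ) = g (diagonal δ)) : f = g :=
  MonoidHom.ext fun A => diagonal_transvection_induction (fun A => f A = g A) A
    (fun δ _ => h δ)
    (fun t => by rw [TransvectionStruct.toMatrix, map_transvection_eq_one f t.hij,
      map_transvection_eq_one g t.hij])
    (fun A B hA hB => by rw [map_mul, map_mul, hA, hB])

end Transvection

theorem det_secondCompound {K : Type*} [Field K] [NeZero (2 : K)] [Fintype m]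
    (A : Matrix m m K) : A.secondCompound.det = A.det ^ (Fintype.card m - 1) := by
  have key : detMonoidHom.comp secondCompoundHom
      = (powMonoidHom (Fintype.card m - 1)).comp (detMonoidHom : Matrix m m K →* K) :=
    monoidHom_ext_diagonal fun δ => by
      simp [secondCompoundHom, secondCompound_diagonal, prod_increasingPair_mul_eq_pow, prod_pow]
  exact DFunLike.congr_fun key A

end Matrix

theorem petrovMatrix_frame_transform {d : ℕ} (G : Fin d → Fin d → Fin d → Fin d → ℝ)
    (hsym : ∀ a b c e, G a b c e = G c e a b) (hasym : ∀ a b c e, G a b c e = - G b a c e)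
    (t : Matrix (Fin d) (Fin d) ℝ) :
    petrovMatrix (fun a b c e =>
        ∑ m, ∑ n, ∑ p, ∑ q, t m a * t n b * t p c * t q e * G m n p q)
      = t.secondCompoundᵀ * petrovMatrix G * t.secondCompound := by
  have hasym_right : ∀ m n p q, G m n q p = -G m n p q := fun m n p q => by
    rw [hsym, hasym, hsym]
  have hzero_left : ∀ m p q, G m m p q = 0 := fun m p q => by linarith [hasym m m p q]
  have hzero_right : ∀ m n p, G m n p p = 0 := fun m n p => by linarith [hasym_right m n p p]
  ext P Q
  simp only [petrovMatrix, of_apply, mul_apply, transpose_apply]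
  calc _ = ∑ m, ∑ n,
        t m P.1.1 * t n P.1.2 * ∑ p, ∑ q, t p Q.1.1 * t q Q.1.2 * G m n p q := by
        simp only [mul_sum, mul_assoc]
    _ = ∑ m, ∑ n, t m P.1.1 * t n P.1.2 *
          ∑ R, t.secondCompound R Q * G m n R.1.1 R.1.2 :=
        sum_congr rfl fun m _ => sum_congr rfl fun n _ =>
          congrArg _ (sum_sum_mul_mul_of_alternating _ _ _ (hasym_right m n) (hzero_right m n))
    _ = ∑ S, t.secondCompound S P * ∑ R, t.secondCompound R Q * G S.1.1 S.1.2 R.1.1 R.1.2 := by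
        refine sum_sum_mul_mul_of_alternating _ _ _ (fun a b => ?_) fun a => ?_
        · simp only [hasym b a, mul_neg, sum_neg_distrib]
        · simp only [hzero_left, mul_zero, sum_const_zero]
    _ = _ := by
        simp only [mul_sum, sum_mul]
        rw [sum_comm]
        exact sum_congr rfl fun _ _ => sum_congr rfl fun _ _ => by ring

theorem det_petrov_of_frame_transform_general
    (d : ℕ)
    (G : Fin d → Fin d → Fin d → Fin d → ℝ)
    (hsym : ∀ a b c e, G a b c e = G c e a b)
    (hasym : ∀ a b c e, G a b c e = - G b a c e)
    (t : Matrix (Fin d) (Fin d) ℝ) :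
    (petrovMatrix (fun a b c e =>
        ∑ m, ∑ n, ∑ p, ∑ q, t m a * t n b * t p c * t q e * G m n p q)).det
      = t.det ^ (2 * d - 2) * (petrovMatrix G).det := by
  rw [petrovMatrix_frame_transform G hsym hasym t, det_mul, det_mul, det_transpose,
    det_secondCompound, Fintype.card_fin, show 2 * d - 2 = (d - 1) + (d - 1) by omega, pow_add]
  ring

/-- Let `d ≥ 2`, let `G` be a rank-4 covariant tensor on `ℝ^d` with the
symmetries `G_{abcd} = G_{cdab} = -G_{bacd}`, and `t` a `d × d` real matrix.  Define
`G'_{abcd} = t^m_a t^n_b t^p_c t^q_d G_{mnpq}`.  Then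
`det (Petrov G') = (det t)^(2d-2) · det (Petrov G)`. -/
theorem det_petrov_of_frame_transform
    (d : ℕ) (hd : 2 ≤ d)
    (G : Fin d → Fin d → Fin d → Fin d → ℝ)
    (hsym : ∀ a b c e, G a b c e = G c e a b)
    (hasym : ∀ a b c e, G a b c e = - G b a c e)
    (t : Matrix (Fin d) (Fin d) ℝ) :
    (petrovMatrix (fun a b c e =>
        ∑ m, ∑ n, ∑ p, ∑ q, t m a * t n b * t p c * t q e * G m n p q)).det
      = t.det ^ (2 * d - 2) * (petrovMatrix G).det :=
  det_petrov_of_frame_transform_general d G hsym hasym t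
end

section
/- (Metaclass III has no symmetries.) Let G be the area metric on ℝ⁴ whose Petrov matrix is the metaclass III normal form with parameters σ₁ ∈ ℝ and τ₁ > 0. If ω ∈ 𝔤𝔩(4,ℝ) is an infinitesimal symmetry of G, then ω = 0. -/
noncomputable section

/-- First members of the ordered Petrov index pairs `[01],[02],[03],[12],[31],[23]`. -/
def pFst : Fin 6 → Fin 4 := ![0, 0, 0, 1, 3, 2]

/-- Second members of the ordered Petrov index pairs `[01],[02],[03],[12],[31],[23]`. -/
def pSnd : Fin 6 → Fin 4 := ![1, 2, 3, 2, 1, 3]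

/-- The Petrov matrix of a rank-4 covariant tensor on `ℝ⁴`: the symmetric `6 × 6` matrix
of components `G_{abcd}` indexed by the ordered pairs `[01],[02],[03],[12],[31],[23]`. -/
def petrov (G : Fin 4 → Fin 4 → Fin 4 → Fin 4 → ℝ) : Matrix (Fin 6) (Fin 6) ℝ :=
  Matrix.of fun A B => G (pFst A) (pSnd A) (pFst B) (pSnd B)

/-- The totally antisymmetric Levi-Civita symbol on four indices with `ε₀₁₂₃ = 1`. -/
def eps (a b c d : Fin 4) : ℝ :=
  (Matrix.of fun i j => if (![a, b, c, d] : Fin 4 → Fin 4) i = j then (1 : ℝ) else 0).det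

/-- The Petrov index associated to a pair of distinct indices (arbitrary on the diagonal). -/
def bIdx : Fin 4 → Fin 4 → Fin 6 :=
  ![![0, 0, 1, 2], ![0, 0, 3, 4], ![1, 3, 0, 5], ![2, 4, 5, 0]]

/-- The sign relating the tensor component `T_{ab}` to the Petrov component at `bIdx a b`
(`0` on the diagonal); the pair `[31]` is stored in the order `(3,1)`. -/
def bSgn : Fin 4 → Fin 4 → ℝ :=
  ![![0, 1, 1, 1], ![-1, 0, 1, -1], ![-1, -1, 0, 1], ![-1, 1, -1, 0]]

/-- The rank-4 tensor with the area metric symmetries reconstructed from a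
(symmetric) Petrov matrix. -/
def fromPetrov (M : Matrix (Fin 6) (Fin 6) ℝ) : Fin 4 → Fin 4 → Fin 4 → Fin 4 → ℝ :=
  fun a b c d => bSgn a b * bSgn c d * M (bIdx a b) (bIdx c d)

/-- The components `(G⁻¹)^{abcd}` of the inverse area metric, characterized by
`Petrov(G⁻¹) = Petrov(G)⁻¹`. -/
def ginv (G : Fin 4 → Fin 4 → Fin 4 → Fin 4 → ℝ) : Fin 4 → Fin 4 → Fin 4 → Fin 4 → ℝ :=
  fromPetrov (petrov G)⁻¹

/-- The area metric volume form `(ω_G)_{abcd} = |det Petrov(G)|^{1/6} ε_{abcd}`. -/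
def vol (G : Fin 4 → Fin 4 → Fin 4 → Fin 4 → ℝ) (a b c d : Fin 4) : ℝ :=
  |(petrov G).det| ^ ((1 : ℝ) / 6) * eps a b c d

/-- The inverse volume form `(ω_G⁻¹)^{abcd} = |det Petrov(G)|^{-1/6} ε^{abcd}`. -/
def volInv (G : Fin 4 → Fin 4 → Fin 4 → Fin 4 → ℝ) (a b c d : Fin 4) : ℝ :=
  |(petrov G).det| ^ (-(1 : ℝ) / 6) * eps a b c d

/-- The Fresnel polynomial
`𝒢(k,k,k,k) = -(1/24)(ω_G)_{mnpq}(ω_G)_{rstu}(G⁻¹)^{mnra}(G⁻¹)^{bpsc}(G⁻¹)^{dqtu} k_a k_b k_c k_d`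
(all repeated indices summed over `0,…,3`; the symmetrization over `a,b,c,d` in the Fresnel
tensor is immaterial after contraction with `k_a k_b k_c k_d`). -/
def fresnelPoly (G : Fin 4 → Fin 4 → Fin 4 → Fin 4 → ℝ) (k : Fin 4 → ℝ) : ℝ :=
  -(1 / 24) * ∑ m : Fin 4, ∑ n : Fin 4, ∑ p : Fin 4, ∑ q : Fin 4, ∑ r : Fin 4, ∑ s : Fin 4,
      ∑ t : Fin 4, ∑ u : Fin 4, ∑ a : Fin 4, ∑ b : Fin 4, ∑ c : Fin 4, ∑ d : Fin 4,
    vol G m n p q * vol G r s t u * ginv G m n r a * ginv G b p s c * ginv G d q t u *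
      k a * k b * k c * k d

/-- `ω ∈ 𝔤𝔩(4,ℝ)` is an infinitesimal symmetry of the area metric `G` if
`ω^m_a G_{mbcd} + ω^m_b G_{amcd} + ω^m_c G_{abmd} + ω^m_d G_{abcm} = 0`
for all `a,b,c,d` (here `ω m a` denotes `ω^m_a`). -/
def IsInfSym (G : Fin 4 → Fin 4 → Fin 4 → Fin 4 → ℝ)
    (ω : Matrix (Fin 4) (Fin 4) ℝ) : Prop :=
  ∀ a b c d : Fin 4,
    (∑ m : Fin 4, ω m a * G m b c d) + (∑ m : Fin 4, ω m b * G a m c d)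
      + (∑ m : Fin 4, ω m c * G a b m d) + (∑ m : Fin 4, ω m d * G a b c m) = 0

/-- The metaclass III normal form with parameters `(σ₁, τ₁)`. -/
def metaclassIII (σ₁ τ₁ : ℝ) : Fin 4 → Fin 4 → Fin 4 → Fin 4 → ℝ :=
  fromPetrov !![0, 0, 0, 0, -τ₁, σ₁;
                0, 0, 0, 0, σ₁, τ₁;
                0, 0, -τ₁, σ₁, 0, 1;
                0, 0, σ₁, τ₁, 1, 0;
                -τ₁, σ₁, 0, 1, 0, 0;
                σ₁, τ₁, 1, 0, 0, 0]

/-! The symmetry condition is a homogeneous linear system in the sixteen entries of `ω` with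
coefficients built from `σ₁` and `τ₁`. Seventeen of its components already force `ω = 0`: they
split into small blocks which, after dividing by `τ₁ ≠ 0`, kill the entries of `ω` a few at a
time; the last block becomes solvable once the trace of `ω` is known to vanish. -/

namespace IsInfSym

variable {σ₁ τ₁ : ℝ} {ω : Matrix (Fin 4) (Fin 4) ℝ}

theorem metaclassIII_equations (hω : IsInfSym (metaclassIII σ₁ τ₁) ω) :
    (τ₁ * (ω 1 0 - ω 3 1) = 0 ∧
      σ₁ * ω.trace + ω 3 1 + τ₁ * (ω 1 2 + ω 2 1) = 0 ∧
      -(σ₁ * ω.trace) + τ₁ * (ω 1 2 + ω 2 1) - ω 1 0 = 0 ∧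
      σ₁ * ω.trace - ω 1 0 - ω 3 1 = 0) ∧
    (τ₁ * ω 3 0 = 0 ∧
      τ₁ * (ω 3 2 - ω 2 0) + ω 3 0 = 0 ∧
      ω 2 0 + τ₁ * (ω 0 0 + 2 * ω 1 1 + ω 3 3) = 0 ∧
      ω 3 2 + τ₁ * (ω 0 0 + 2 * ω 2 2 + ω 3 3) = 0 ∧
      ω 2 0 = τ₁ * (ω 0 0 + ω 3 3) ∧
      τ₁ * (ω 1 1 + ω 2 2) = ω 3 2) ∧
    (τ₁ * (ω 2 3 - ω 0 2) + ω 0 0 + ω 2 2 + 2 * ω 3 3 = 0 ∧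
      τ₁ * (ω 2 3 - ω 0 2) = 2 * ω 1 1 + ω 2 2 + ω 3 3 ∧
      ω 2 3 = -(τ₁ * ω 0 3) ∧
      ω 0 2 = τ₁ * ω 0 3) ∧
    (ω 2 1 + τ₁ * (ω 1 3 - ω 0 1) = 0 ∧
      ω 1 2 = τ₁ * (ω 0 1 - ω 1 3) ∧
      ω 0 1 + ω 1 3 = 0) := by
  have e0101 := hω 0 1 0 1
  have e0103 := hω 0 1 0 3
  have e0112 := hω 0 1 1 2
  have e0113 := hω 0 1 1 3
  have e0123 := hω 0 1 2 3
  have e0213 := hω 0 2 1 3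
  have e0223 := hω 0 2 2 3
  have e0303 := hω 0 3 0 3
  have e0312 := hω 0 3 1 2
  have e0313 := hω 0 3 1 3
  have e0323 := hω 0 3 2 3
  have e1212 := hω 1 2 1 2
  have e1213 := hω 1 2 1 3
  have e1223 := hω 1 2 2 3
  have e1313 := hω 1 3 1 3
  have e1323 := hω 1 3 2 3
  have e2323 := hω 2 3 2 3
  simp only [metaclassIII, fromPetrov, bSgn, bIdx, Fin.sum_univ_four, Matrix.of_apply,
    Matrix.cons_val] at *
  simp only [Matrix.trace, Matrix.diag, Fin.sum_univ_four]
  exact ⟨⟨by linear_combination e0103, by linear_combination e0123,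
      by linear_combination e0213, by linear_combination e0312⟩,
    ⟨by linear_combination (-1 / 2 : ℝ) * e0101, by linear_combination e0112,
      by linear_combination e0113, by linear_combination e0223,
      by linear_combination (1 / 2 : ℝ) * e0303, by linear_combination (1 / 2 : ℝ) * e1212⟩,
    ⟨by linear_combination e0323, by linear_combination e1213,
      by linear_combination (-1 / 2 : ℝ) * e1313, by linear_combination (1 / 2 : ℝ) * e2323⟩,
    ⟨by linear_combination e0313, by linear_combination -e1223, by linear_combination e1323⟩⟩

theorem metaclassIII_entries_10_31 (hω : IsInfSym (metaclassIII σ₁ τ₁) ω) (hτ : τ₁ ≠ 0) :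
    ω 1 0 = 0 ∧ ω 3 1 = 0 := by
  obtain ⟨⟨e2, e5, e6, e9⟩, -⟩ := hω.metaclassIII_equations
  have hadd : ω 1 0 + ω 3 1 = 0 := by linear_combination (e5 - e6 - 2 * e9) / 3
  have heq : ω 1 0 = ω 3 1 := mul_left_cancel₀ hτ (by linear_combination e2)
  exact ⟨by linear_combination (hadd + heq) / 2, by linear_combination (hadd - heq) / 2⟩

theorem metaclassIII_entries_30_20_32_11_22 (hω : IsInfSym (metaclassIII σ₁ τ₁) ω)
    (hτ : τ₁ ≠ 0) :
    ω 3 0 = 0 ∧ ω 2 0 = 0 ∧ ω 3 2 = 0 ∧ ω 1 1 = 0 ∧ ω 2 2 = 0 ∧ ω 0 0 + ω 3 3 = 0 := by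
  obtain ⟨-, ⟨e1, e3, e4, e7, e8, e12⟩, -⟩ := hω.metaclassIII_equations
  have h30 : ω 3 0 = 0 := mul_left_cancel₀ hτ (by linear_combination e1)
  have h32 : ω 3 2 = ω 2 0 := mul_left_cancel₀ hτ (by linear_combination e3 - h30)
  have h20 : ω 2 0 = 0 := by linear_combination (e4 + 2 * e8 + e7 - 3 * h32 - 2 * e12) / 6
  have h11 : ω 1 1 = 0 := mul_left_cancel₀ hτ (by linear_combination (e4 + e8) / 2 - h20)
  have h22 : ω 2 2 = 0 := mul_left_cancel₀ hτ (by linear_combination (e7 + e8 - h32) / 2 - h20)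
  exact ⟨h30, h20, by rw [h32, h20], h11, h22,
    mul_left_cancel₀ hτ (by linear_combination h20 - e8)⟩

theorem metaclassIII_entries_00_33_02_03_23 (hω : IsInfSym (metaclassIII σ₁ τ₁) ω)
    (hτ : τ₁ ≠ 0) :
    ω 0 0 = 0 ∧ ω 3 3 = 0 ∧ ω 0 2 = 0 ∧ ω 0 3 = 0 ∧ ω 2 3 = 0 := by
  obtain ⟨-, -, ⟨e11, e13, e15, e17⟩, -⟩ := hω.metaclassIII_equations
  obtain ⟨-, -, -, h11, h22, h0033⟩ := hω.metaclassIII_entries_30_20_32_11_22 hτ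
  have h33 : ω 3 3 = 0 := by linear_combination (e11 - e13 - h0033 - 2 * h11 - 2 * h22) / 2
  have h23 : ω 2 3 = ω 0 2 :=
    mul_left_cancel₀ hτ (by linear_combination e13 + 2 * h11 + h22 + h33)
  have h03 : ω 0 3 = 0 := mul_left_cancel₀ hτ (by linear_combination (e15 - e17 - h23) / 2)
  exact ⟨by linear_combination h0033 - h33, h33, by rw [e17, h03, mul_zero], h03,
    by rw [e15, h03, mul_zero, neg_zero]⟩

theorem metaclassIII_entries_01_12_13_21 (hω : IsInfSym (metaclassIII σ₁ τ₁) ω)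
    (hτ : τ₁ ≠ 0) :
    ω 0 1 = 0 ∧ ω 1 2 = 0 ∧ ω 1 3 = 0 ∧ ω 2 1 = 0 := by
  obtain ⟨⟨-, e5, -, -⟩, -, -, ⟨e10, e14, e16⟩⟩ := hω.metaclassIII_equations
  obtain ⟨-, h31⟩ := hω.metaclassIII_entries_10_31 hτ
  obtain ⟨-, -, -, h11, h22, -⟩ := hω.metaclassIII_entries_30_20_32_11_22 hτ
  obtain ⟨h00, h33, -⟩ := hω.metaclassIII_entries_00_33_02_03_23 hτ
  have htrace : ω.trace = 0 := by
    simp only [Matrix.trace, Matrix.diag, Fin.sum_univ_four, h00, h11, h22, h33, add_zero]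
  have hsym : ω 1 2 + ω 2 1 = 0 :=
    mul_left_cancel₀ hτ (by linear_combination e5 - σ₁ * htrace - h31)
  have h01 : ω 0 1 = 0 :=
    mul_left_cancel₀ hτ (by linear_combination (hsym - e14 - e10 + 2 * τ₁ * e16) / 4)
  have h13 : ω 1 3 = 0 := by linear_combination e16 - h01
  exact ⟨h01, by rw [e14, h01, h13, sub_zero, mul_zero], h13,
    by linear_combination e10 + τ₁ * h01 - τ₁ * h13⟩

end IsInfSym

/-- Metaclass III area metrics have no (infinitesimal) symmetries:
if `ω ∈ 𝔤𝔩(4,ℝ)` is an infinitesimal symmetry of the metaclass III normal form with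
`τ₁ > 0`, then `ω = 0`. -/
theorem metaclass_III_no_symmetries
    (σ₁ τ₁ : ℝ) (hτ : 0 < τ₁)
    (ω : Matrix (Fin 4) (Fin 4) ℝ)
    (hω : IsInfSym (metaclassIII σ₁ τ₁) ω) :
    ω = 0 := by
  obtain ⟨h10, h31⟩ := hω.metaclassIII_entries_10_31 hτ.ne'
  obtain ⟨h30, h20, h32, h11, h22, -⟩ := hω.metaclassIII_entries_30_20_32_11_22 hτ.ne'
  obtain ⟨h00, h33, h02, h03, h23⟩ := hω.metaclassIII_entries_00_33_02_03_23 hτ.ne'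
  obtain ⟨h01, h12, h13, h21⟩ := hω.metaclassIII_entries_01_12_13_21 hτ.ne'
  ext i j
  fin_cases i <;> fin_cases j <;> assumption

end
end

section
/- (Fresnel polynomial of spherically symmetric area metrics.) Let ξ, σ, τ ∈ ℝ, let ε₁, ε₂ ∈ {−1,0,1} and ε₃² ∈ {0,1}, and let G be the area metric on ℝ⁴ whose inverse has Petrov matrix Petrov(G⁻¹) = [[ξ,0,0,0,0,2σ+τ],[0,ε₂,0,0,−σ+τ,0],[0,0,ε₂,−σ+τ,0,0],[0,0,−σ+τ,ε₁,0,0],[0,−σ+τ,0,0,ε₁,0],[2σ+τ,0,0,0,0,ε₃²]], assumed invertible. Then there exists a nonzero real constant c such that for every covector k = (k₀,k₁,k₂,k₃), 𝒢(k,k,k,k) = c·(ξu² + (ε₁ε₂ + ξε₃² − 9σ²)uv + ε₁ε₂ε₃²v²), where u = ε₂k₀² + ε₁k₁² and v = k₂² + k₃². -/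
/-! Since `ω_G = |det Petrov(G)|^{1/6} ε`, the Fresnel polynomial is `-(1/24) |det Petrov(G)|^{1/3}`
times a contraction of two Levi-Civita symbols with three copies of `G⁻¹`, and `G⁻¹` is read off
from `Petrov(G⁻¹) = P`.  Contracting `k` into each copy of `G⁻¹` first and expanding both
Levi-Civita sums over the 24 permutations turns this into a polynomial identity in the entries
of `P` and the components of `k`. -/

noncomputable section

theorem sum_eps_mul (F : Fin 4 → Fin 4 → Fin 4 → Fin 4 → ℝ) :
    ∑ a, ∑ b, ∑ c, ∑ d, eps a b c d * F a b c d =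
      F 0 1 2 3 - F 0 1 3 2 - F 0 2 1 3 + F 0 2 3 1 + F 0 3 1 2 - F 0 3 2 1 - F 1 0 2 3
      + F 1 0 3 2 + F 1 2 0 3 - F 1 2 3 0 - F 1 3 0 2 + F 1 3 2 0 + F 2 0 1 3 - F 2 0 3 1
      - F 2 1 0 3 + F 2 1 3 0 + F 2 3 0 1 - F 2 3 1 0 - F 3 0 1 2 + F 3 0 2 1 + F 3 1 0 2
      - F 3 1 2 0 - F 3 2 0 1 + F 3 2 1 0 := by
  simp only [eps, Matrix.det_succ_row_zero, Matrix.det_unique, Matrix.of_apply,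
    Matrix.submatrix_apply, Matrix.cons_val, Fin.sum_univ_succ, Fin.succAbove, Fin.default_eq_zero,
    Fin.coe_ofNat_eq_mod, Finset.univ_unique, Finset.sum_singleton, Fin.reduceSucc,
    Fin.reduceCastSucc, Fin.reduceLT, Fin.reduceEq, ↓reduceIte]
  ring

theorem sum_mul_eq_mul_sum_mul_sum {ι R : Type*} [Fintype ι] [CommSemiring R] (f : ι → R)
    (g : ι → ι → R) (h k : ι → R) (K : R) :
    ∑ a, ∑ b, ∑ c, ∑ d, K * f a * g b c * h d * k a * k b * k c * k d =
      K * ((∑ a, f a * k a) * ((∑ b, ∑ c, g b c * k b * k c) * ∑ d, h d * k d)) := by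
  simp_rw [Finset.sum_mul, Finset.mul_sum]
  simp only [mul_comm, mul_left_comm]

def fresnelContraction (T : Fin 4 → Fin 4 → Fin 4 → Fin 4 → ℝ) (k : Fin 4 → ℝ) : ℝ :=
  ∑ m, ∑ n, ∑ p, ∑ q, eps m n p q * ∑ r, ∑ s, ∑ t, ∑ u, eps r s t u *
    ((∑ a, T m n r a * k a) * ((∑ b, ∑ c, T b p s c * k b * k c) * ∑ d, T d q t u * k d))

theorem fresnelPoly_eq_mul_fresnelContraction (G : Fin 4 → Fin 4 → Fin 4 → Fin 4 → ℝ)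
    (k : Fin 4 → ℝ) :
    fresnelPoly G k =
      -(1 / 24) * (|(petrov G).det| ^ ((1 : ℝ) / 6)) ^ 2 * fresnelContraction (ginv G) k := by
  have summand (e e' X : ℝ) :
      |(petrov G).det| ^ ((1 : ℝ) / 6) * e * (|(petrov G).det| ^ ((1 : ℝ) / 6) * e') * X =
        (|(petrov G).det| ^ ((1 : ℝ) / 6)) ^ 2 * (e * (e' * X)) := by
    ring
  simp only [fresnelPoly, vol, sum_mul_eq_mul_sum_mul_sum]
  simp only [summand, ← Finset.mul_sum]
  rw [fresnelContraction, mul_assoc]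

def sphericalPetrov (ξ σ τ ε₁ ε₂ ε₃sq : ℝ) : Matrix (Fin 6) (Fin 6) ℝ :=
  !![ξ, 0, 0, 0, 0, 2*σ + τ;
     0, ε₂, 0, 0, -σ + τ, 0;
     0, 0, ε₂, -σ + τ, 0, 0;
     0, 0, -σ + τ, ε₁, 0, 0;
     0, -σ + τ, 0, 0, ε₁, 0;
     2*σ + τ, 0, 0, 0, 0, ε₃sq]

theorem fresnelContraction_fromPetrov_sphericalPetrov (ξ σ τ ε₁ ε₂ ε₃sq : ℝ) (k : Fin 4 → ℝ) :
    fresnelContraction (fromPetrov (sphericalPetrov ξ σ τ ε₁ ε₂ ε₃sq)) k =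
      24 * (ξ * (ε₂ * k 0 ^ 2 + ε₁ * k 1 ^ 2) ^ 2
        + (ε₁ * ε₂ + ξ * ε₃sq - 9 * σ ^ 2) * (ε₂ * k 0 ^ 2 + ε₁ * k 1 ^ 2) * (k 2 ^ 2 + k 3 ^ 2)
        + ε₁ * ε₂ * ε₃sq * (k 2 ^ 2 + k 3 ^ 2) ^ 2) := by
  simp only [fresnelContraction, sum_eps_mul]
  simp only [Fin.sum_univ_four, fromPetrov, sphericalPetrov, bSgn, bIdx, Matrix.of_apply,
    Matrix.cons_val, mul_zero, zero_mul, add_zero, zero_add]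
  ring

theorem fresnel_of_spherically_symmetric_general
    (ξ σ τ ε₁ ε₂ ε₃sq : ℝ)
    (P : Matrix (Fin 6) (Fin 6) ℝ)
    (hP : P = !![ξ, 0, 0, 0, 0, 2*σ + τ;
                 0, ε₂, 0, 0, -σ + τ, 0;
                 0, 0, ε₂, -σ + τ, 0, 0;
                 0, 0, -σ + τ, ε₁, 0, 0;
                 0, -σ + τ, 0, 0, ε₁, 0;
                 2*σ + τ, 0, 0, 0, 0, ε₃sq])
    (hPinv : IsUnit P.det)
    (G : Fin 4 → Fin 4 → Fin 4 → Fin 4 → ℝ)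
    (hGP : petrov G = P⁻¹) :
    ∃ c : ℝ, c ≠ 0 ∧ ∀ k : Fin 4 → ℝ,
      fresnelPoly G k
        = c * (ξ * (ε₂ * (k 0)^2 + ε₁ * (k 1)^2)^2
            + (ε₁ * ε₂ + ξ * ε₃sq - 9 * σ^2)
                * (ε₂ * (k 0)^2 + ε₁ * (k 1)^2) * ((k 2)^2 + (k 3)^2)
            + ε₁ * ε₂ * ε₃sq * ((k 2)^2 + (k 3)^2)^2) := by
  have hdet : (petrov G).det ≠ 0 := hGP ▸ (Matrix.isUnit_nonsing_inv_det P hPinv).ne_zero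
  have hginv : ginv G = fromPetrov (sphericalPetrov ξ σ τ ε₁ ε₂ ε₃sq) := by
    rw [ginv, hGP, Matrix.nonsing_inv_nonsing_inv P hPinv, hP, sphericalPetrov]
  refine ⟨-(|(petrov G).det| ^ ((1 : ℝ) / 6)) ^ 2,
    neg_ne_zero.2 (pow_ne_zero 2 (Real.rpow_pos_of_pos (abs_pos.2 hdet) _).ne'), fun k => ?_⟩
  rw [fresnelPoly_eq_mul_fresnelContraction, hginv, fresnelContraction_fromPetrov_sphericalPetrov]
  ring

/-- (Fresnel polynomial of spherically symmetric area metrics.)  Let `G`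
be the area metric on `ℝ⁴` whose inverse has the displayed spherically symmetric Petrov
matrix `P` (assumed invertible), with `ε₁, ε₂ ∈ {-1,0,1}` and `ε₃² ∈ {0,1}`.  Then for a
nonzero constant `c`,
`𝒢(k,k,k,k) = c (ξ u² + (ε₁ε₂ + ξ ε₃² - 9σ²) u v + ε₁ε₂ε₃² v²)`,
where `u = ε₂k₀² + ε₁k₁²` and `v = k₂² + k₃²`. -/
theorem fresnel_of_spherically_symmetric
    (ξ σ τ ε₁ ε₂ ε₃sq : ℝ)
    (hε₁ : ε₁ = -1 ∨ ε₁ = 0 ∨ ε₁ = 1)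
    (hε₂ : ε₂ = -1 ∨ ε₂ = 0 ∨ ε₂ = 1)
    (hε₃ : ε₃sq = 0 ∨ ε₃sq = 1)
    (P : Matrix (Fin 6) (Fin 6) ℝ)
    (hP : P = !![ξ, 0, 0, 0, 0, 2*σ + τ;
                 0, ε₂, 0, 0, -σ + τ, 0;
                 0, 0, ε₂, -σ + τ, 0, 0;
                 0, 0, -σ + τ, ε₁, 0, 0;
                 0, -σ + τ, 0, 0, ε₁, 0;
                 2*σ + τ, 0, 0, 0, 0, ε₃sq])
    (hPinv : IsUnit P.det)
    (G : Fin 4 → Fin 4 → Fin 4 → Fin 4 → ℝ)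
    (hsym : ∀ a b c d, G a b c d = G c d a b)
    (hasym : ∀ a b c d, G a b c d = - G b a c d)
    (hGP : petrov G = P⁻¹) :
    ∃ c : ℝ, c ≠ 0 ∧ ∀ k : Fin 4 → ℝ,
      fresnelPoly G k
        = c * (ξ * (ε₂ * (k 0)^2 + ε₁ * (k 1)^2)^2
            + (ε₁ * ε₂ + ξ * ε₃sq - 9 * σ^2)
                * (ε₂ * (k 0)^2 + ε₁ * (k 1)^2) * ((k 2)^2 + (k 3)^2)
            + ε₁ * ε₂ * ε₃sq * ((k 2)^2 + (k 3)^2)^2) :=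
  fresnel_of_spherically_symmetric_general ξ σ τ ε₁ ε₂ ε₃sq P hP hPinv G hGP

end
end
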